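/- arXiv:2404.03035 — 9 statements merged into one kernel-verified Lean document; each statement's English description precedes it below -/
import Mathlib

section
/- Let f : ℝⁿ → ℝ be p-times continuously differentiable with ∥∇ᵖf(x) − ∇ᵖf(y)∥ ≤ (p−1)!·L·∥x−y∥ for all x, y. Then for all x, s ∈ ℝⁿ, ∥∇f(x+s) − ∇_s T_p(x,s)∥ ≤ L·∥s∥^p, where T_p is the p-th order Taylor polynomial of f at x. -/
/-!
Restricting `F` to the segment `t ↦ x + t • s` reduces everything to one variable. For a
`C^(q+1)` function `g : ℝ → G`, subtracting the last Taylor term from the integral form of the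
remainder of order `q` gives
`g b - T_{q+1} g = ∫ t in a..b, (b - t)^q / q! • (g^(q+1) t - g^(q+1) a)`,
and a Lipschitz bound `M (t - a)` on the bracket turns this into the beta integral
`M (b - a)^(q+2) / (q+2)!`. Applied to `F = Df` with `m = p - 1` and `C = (p-1)! L`, the remainder
of the gradient is at most `L ‖s‖^p / p`.
-/

open Finset
open scoped Nat

section

variable {E G : Type*} [NormedAddCommGroup E] [NormedSpace ℝ E]
  [NormedAddCommGroup G] [NormedSpace ℝ G]

theorem iteratedDeriv_comp_add_smul {n : WithTop ℕ∞} {k : ℕ} {F : E → G} (hF : ContDiff ℝ n F)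
    (hk : k ≤ n) (x s : E) (t : ℝ) :
    iteratedDeriv k (fun t : ℝ => F (x + t • s)) t =
      iteratedFDeriv ℝ k F (x + t • s) (fun _ => s) := by
  have hFx : ContDiff ℝ n (fun y => F (x + y)) := hF.comp (by fun_prop)
  have hline : (fun t : ℝ => F (x + t • s)) =
      (fun y => F (x + y)) ∘ ContinuousLinearMap.smulRight (1 : ℝ →L[ℝ] ℝ) s := by
    ext t; simp
  rw [iteratedDeriv_eq_iteratedFDeriv, hline,
    ContinuousLinearMap.iteratedFDeriv_comp_right _ hFx _ hk,
    ContinuousMultilinearMap.compContinuousLinearMap_apply, iteratedFDeriv_comp_add_left]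
  simp

theorem integral_pow_mul_sub (q : ℕ) (h : ℝ) :
    ∫ u in (0 : ℝ)..h, u ^ q * (h - u) = h ^ (q + 2) / ((q + 1) * (q + 2)) := by
  have hexpand : ∀ u : ℝ, u ^ q * (h - u) = h * u ^ q - u ^ (q + 1) := fun u => by ring
  simp only [hexpand]
  rw [intervalIntegral.integral_sub
      ((by fun_prop : Continuous fun u : ℝ => h * u ^ q).intervalIntegrable _ _)
      ((continuous_pow _).intervalIntegrable _ _),
    intervalIntegral.integral_const_mul, integral_pow, integral_pow]
  field_simp
  push_cast
  ring

theorem sub_taylorWithinEval_succ_eq_integral [CompleteSpace G] {g : ℝ → G} {q : ℕ} {a b : ℝ}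
    (hab : a ≤ b) (hg : ContDiff ℝ (q + 1 : ℕ) g) :
    g b - taylorWithinEval g (q + 1) (Set.Icc a b) a b =
      ∫ t in a..b, ((b - t) ^ q / q !) •
        (iteratedDeriv (q + 1) g t - iteratedDeriv (q + 1) g a) := by
  rcases hab.eq_or_lt with rfl | hab'
  · simp [taylorWithinEval_self]
  set D := iteratedDeriv (q + 1) g
  have hD : ∀ t ∈ Set.Icc a b, iteratedDerivWithin (q + 1) g (Set.Icc a b) t = D t :=
    fun t ht => iteratedDerivWithin_eq_iteratedDeriv (uniqueDiffOn_Icc hab') hg.contDiffAt ht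
  have hcont : Continuous D := hg.continuous_iteratedDeriv _ le_rfl
  have hweight : ∫ t in a..b, (b - t) ^ q / q ! = (((q : ℝ) + 1) * q !)⁻¹ * (b - a) ^ (q + 1) := by
    rw [intervalIntegral.integral_div, intervalIntegral.integral_comp_sub_left (· ^ q),
      integral_pow]
    field_simp
    simp
  have hwithin : ∫ t in a..b, ((b - t) ^ q / q !) • iteratedDerivWithin (q + 1) g (Set.Icc a b) t =
      ∫ t in a..b, ((b - t) ^ q / q !) • D t := by
    refine intervalIntegral.integral_congr fun t ht => ?_
    rw [Set.uIcc_of_le hab] at ht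
    simp only [hD t ht]
  rw [taylorWithinEval_succ, sub_add_eq_sub_sub, ← Set.uIcc_of_le hab,
    taylor_integral_remainder hg.contDiffOn, Set.uIcc_of_le hab, hwithin, hD a ⟨le_rfl, hab⟩,
    ← hweight, ← intervalIntegral.integral_smul_const, ← intervalIntegral.integral_sub]
  · simp only [smul_sub]
  · exact (by fun_prop : Continuous fun t => ((b - t) ^ q / q !) • D t).intervalIntegrable _ _
  · exact (by fun_prop : Continuous fun t => ((b - t) ^ q / q !) • D a).intervalIntegrable _ _

theorem norm_sub_taylorWithinEval_le_of_iteratedDeriv_sub_le [CompleteSpace G] {g : ℝ → G}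
    {m : ℕ} {M a b : ℝ} (hab : a ≤ b) (hg : ContDiff ℝ m g)
    (hM : ∀ t ∈ Set.Icc a b, ‖iteratedDeriv m g t - iteratedDeriv m g a‖ ≤ M * (t - a)) :
    ‖g b - taylorWithinEval g m (Set.Icc a b) a b‖ ≤ M * (b - a) ^ (m + 1) / (m + 1)! := by
  obtain _ | q := m
  · simpa [taylor_within_zero_eval] using hM b ⟨hab, le_rfl⟩
  have hpointwise : ∀ t ∈ Set.Ioc a b,
      ‖((b - t) ^ q / q !) • (iteratedDeriv (q + 1) g t - iteratedDeriv (q + 1) g a)‖ ≤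
        M / q ! * ((b - t) ^ q * ((b - a) - (b - t))) := by
    intro t ht
    have hweight : 0 ≤ (b - t) ^ q / q ! := by have := sub_nonneg.2 ht.2; positivity
    rw [norm_smul, Real.norm_of_nonneg hweight]
    calc _ ≤ (b - t) ^ q / q ! * (M * (t - a)) :=
          mul_le_mul_of_nonneg_left (hM t ⟨ht.1.le, ht.2⟩) hweight
      _ = _ := by ring
  calc ‖g b - taylorWithinEval g (q + 1) (Set.Icc a b) a b‖
      ≤ ∫ t in a..b, M / q ! * ((b - t) ^ q * ((b - a) - (b - t))) := by
        rw [sub_taylorWithinEval_succ_eq_integral hab hg]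
        exact intervalIntegral.norm_integral_le_of_norm_le hab (.of_forall hpointwise)
          ((by fun_prop : Continuous _).intervalIntegrable _ _)
    _ = M / q ! * ((b - a) ^ (q + 2) / ((q + 1) * (q + 2))) := by
        rw [intervalIntegral.integral_comp_sub_left (fun u => M / q ! * (u ^ q * ((b - a) - u))),
          intervalIntegral.integral_const_mul, sub_self, integral_pow_mul_sub]
    _ = M * (b - a) ^ (q + 1 + 1) / (q + 1 + 1)! := by
        rw [Nat.factorial_succ, Nat.factorial_succ]
        push_cast
        field_simp
        ring

theorem norm_sub_taylor_le_of_iteratedFDeriv_sub_le [CompleteSpace G] {m : ℕ} {F : E → G}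
    (hF : ContDiff ℝ m F) {C : ℝ} {x : E}
    (hLip : ∀ y, ‖iteratedFDeriv ℝ m F y - iteratedFDeriv ℝ m F x‖ ≤ C * ‖y - x‖) (s : E) :
    ‖F (x + s) - ∑ j ∈ range (m + 1), (1 / j ! : ℝ) • iteratedFDeriv ℝ j F x (fun _ => s)‖ ≤
      C * ‖s‖ ^ (m + 1) / (m + 1)! := by
  have hline : ContDiff ℝ m fun t : ℝ => F (x + t • s) := hF.comp (by fun_prop)
  have hderiv : ∀ j ≤ m, ∀ t : ℝ, iteratedDeriv j (fun t : ℝ => F (x + t • s)) t =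
      iteratedFDeriv ℝ j F (x + t • s) (fun _ => s) :=
    fun j hj => iteratedDeriv_comp_add_smul hF (by exact_mod_cast hj) x s
  have hM : ∀ t ∈ Set.Icc (0 : ℝ) 1, ‖iteratedDeriv m (fun t : ℝ => F (x + t • s)) t -
      iteratedDeriv m (fun t : ℝ => F (x + t • s)) 0‖ ≤ C * ‖s‖ ^ (m + 1) * (t - 0) := by
    intro t ht
    rw [hderiv m le_rfl, hderiv m le_rfl, zero_smul, add_zero, ← sub_apply]
    calc _ ≤ ‖iteratedFDeriv ℝ m F (x + t • s) - iteratedFDeriv ℝ m F x‖ * ∏ _ : Fin m, ‖s‖ :=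
          ContinuousMultilinearMap.le_opNorm _ _
      _ ≤ C * ‖t • s‖ * ‖s‖ ^ m := by
          rw [prod_const, card_univ, Fintype.card_fin]
          gcongr
          simpa using hLip (x + t • s)
      _ = _ := by rw [norm_smul, Real.norm_of_nonneg ht.1]; ring
  calc _ = ‖(fun t : ℝ => F (x + t • s)) 1 -
        taylorWithinEval (fun t : ℝ => F (x + t • s)) m (Set.Icc 0 1) 0 1‖ := by
        rw [taylor_within_apply]
        congr 2
        · simp
        refine sum_congr rfl fun j hj => ?_
        have hjm : j ≤ m := mem_range_succ_iff.1 hj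
        rw [iteratedDerivWithin_eq_iteratedDeriv (uniqueDiffOn_Icc zero_lt_one)
          (hline.contDiffAt.of_le (by exact_mod_cast hjm)) ⟨le_rfl, zero_le_one⟩, hderiv j hjm]
        simp
    _ ≤ _ := (norm_sub_taylorWithinEval_le_of_iteratedDeriv_sub_le zero_le_one hline hM).trans_eq
        (by simp)

theorem norm_iteratedFDeriv_fderiv_sub {n : ℕ} {f : E → G} (a b : E) :
    ‖iteratedFDeriv ℝ n (fderiv ℝ f) a - iteratedFDeriv ℝ n (fderiv ℝ f) b‖ =
      ‖iteratedFDeriv ℝ (n + 1) f a - iteratedFDeriv ℝ (n + 1) f b‖ := by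
  rw [iteratedFDeriv_succ_eq_comp_right, iteratedFDeriv_succ_eq_comp_right, Function.comp_apply,
    Function.comp_apply, ← LinearIsometryEquiv.map_sub, LinearIsometryEquiv.norm_map]

theorem iteratedFDeriv_succ_apply_snoc {n : ℕ} {f : E → G} (x : E) (m : Fin n → E) (v : E) :
    iteratedFDeriv ℝ (n + 1) f x (Fin.snoc m v) = iteratedFDeriv ℝ n (fderiv ℝ f) x m v := by
  rw [iteratedFDeriv_succ_apply_right, Fin.init_snoc, Fin.snoc_last]

end

/-- Gradient Taylor error bound: if `f` is `C^p` with globally Lipschitz `p`-th derivative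
(constant `(p-1)! * L`), then `‖∇f(x+s) - ∇_s T_p(x,s)‖ ≤ L * ‖s‖^p`, stated through the
action on an arbitrary direction `v`. -/
theorem grad_taylor_error_bound {n : ℕ} (p : ℕ) (hp : 1 ≤ p) (L : ℝ) (hL : 0 < L)
    (f : EuclideanSpace ℝ (Fin n) → ℝ)
    (hf : ContDiff ℝ (p : ℕ∞) f)
    (hLip : ∀ x y : EuclideanSpace ℝ (Fin n),
      ‖iteratedFDeriv ℝ p f x - iteratedFDeriv ℝ p f y‖ ≤ (Nat.factorial (p - 1)) * L * ‖x - y‖) :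
    ∀ x s v : EuclideanSpace ℝ (Fin n),
      |fderiv ℝ f (x + s) v - ∑ j ∈ Finset.range p,
          (1 / (Nat.factorial j) : ℝ) *
            iteratedFDeriv ℝ (j + 1) f x (Fin.snoc (fun _ : Fin j => s) v)|
        ≤ L * ‖s‖ ^ p * ‖v‖ := by
  intro x s v
  obtain ⟨q, rfl⟩ : ∃ q, p = q + 1 := ⟨p - 1, by omega⟩
  have hF : ContDiff ℝ q (fderiv ℝ f) := hf.fderiv_right (by norm_cast)
  have hLipF : ∀ y, ‖iteratedFDeriv ℝ q (fderiv ℝ f) y - iteratedFDeriv ℝ q (fderiv ℝ f) x‖ ≤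
      q ! * L * ‖y - x‖ := fun y => by
    simpa [norm_iteratedFDeriv_fderiv_sub] using hLip y x
  have happly : fderiv ℝ f (x + s) v - ∑ j ∈ range (q + 1),
      (1 / j ! : ℝ) * iteratedFDeriv ℝ (j + 1) f x (Fin.snoc (fun _ : Fin j => s) v) =
      (fderiv ℝ f (x + s) - ∑ j ∈ range (q + 1),
        (1 / j ! : ℝ) • iteratedFDeriv ℝ j (fderiv ℝ f) x (fun _ => s)) v := by
    simp [iteratedFDeriv_succ_apply_snoc]
  rw [← Real.norm_eq_abs, happly]
  calc _ ≤ _ := ContinuousLinearMap.le_opNorm _ v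
    _ ≤ q ! * L * ‖s‖ ^ (q + 1) / (q + 1)! * ‖v‖ := by
        gcongr
        exact norm_sub_taylor_le_of_iteratedFDeriv_sub_le hF hLipF s
    _ = L * ‖s‖ ^ (q + 1) * ‖v‖ / (q + 1) := by
        rw [Nat.factorial_succ]
        push_cast
        field_simp
    _ ≤ L * ‖s‖ ^ (q + 1) * ‖v‖ := div_le_self (by positivity) (by simp)
end

section
/- Let γ₁ > 1 > γ₂ > 0 and σ₀ > 0. Suppose a sequence (σ_k)_{k=0}^{m} of positive reals satisfies σ_{k+1} ≥ γ₂·σ_k for k in a set S ⊆ {0,…,m−1} and σ_{k+1} ≥ γ₁·σ_k for k ∈ {0,…,m−1} \ S, and σ_k ≤ σ_max for all k ≤ m. Then m ≤ |S|·(1 + |log γ₂|/log γ₁) + (1/log γ₁)·log(σ_max/σ₀). -/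
/-!
Chaining the growth conditions from `σ₀` gives `σ₀ γ₂^s γ₁^(m-s) ≤ σ_m ≤ σ_max`, where `s ≤ |S|`
counts the successful iterations before `m`. Taking logarithms,
`(m - s) log γ₁ ≤ log (σ_max / σ₀) + s |log γ₂|`, and dividing by `log γ₁ > 0` gives the bound.
-/

open Finset Real

theorem mul_prod_range_le_of_mul_le_succ {σ c : ℕ → ℝ} {n : ℕ} (hc : ∀ k < n, 0 ≤ c k)
    (h : ∀ k < n, c k * σ k ≤ σ (k + 1)) : σ 0 * ∏ k ∈ range n, c k ≤ σ n := by
  induction n with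
  | zero => simp
  | succ n ih =>
    calc σ 0 * ∏ k ∈ range (n + 1), c k = c n * (σ 0 * ∏ k ∈ range n, c k) := by
          rw [prod_range_succ]; ring
      _ ≤ c n * σ n := by
          gcongr
          · exact hc n n.lt_succ_self
          · exact ih (fun k hk => hc k (hk.trans n.lt_succ_self))
              (fun k hk => h k (hk.trans n.lt_succ_self))
      _ ≤ σ (n + 1) := h n n.lt_succ_self

theorem natCast_add_le_of_mul_pow_mul_pow_le {γ₁ γ₂ σ₀ σmax : ℝ} {s t c : ℕ} (hγ₁ : 1 < γ₁)
    (hγ₂ : 0 < γ₂) (hσ₀ : 0 < σ₀) (hsc : s ≤ c) (h : σ₀ * (γ₂ ^ s * γ₁ ^ t) ≤ σmax) :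
    (s + t : ℝ) ≤ c * (1 + |log γ₂| / log γ₁) + (1 / log γ₁) * log (σmax / σ₀) := by
  have hlog₁ : 0 < log γ₁ := log_pos hγ₁
  have hpos : 0 < σ₀ * (γ₂ ^ s * γ₁ ^ t) := by positivity
  have hlog : log σ₀ + (s * log γ₂ + t * log γ₁) ≤ log σmax := by
    have := log_le_log hpos h
    rwa [log_mul hσ₀.ne' (by positivity), log_mul (by positivity) (by positivity),
      log_pow, log_pow] at this
  have ht : t * log γ₁ ≤ log (σmax / σ₀) + s * |log γ₂| := by
    rw [log_div (hpos.trans_le h).ne' hσ₀.ne']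
    nlinarith [neg_le_abs (log γ₂), (Nat.cast_nonneg s : (0 : ℝ) ≤ s)]
  have hcoef : 0 ≤ 1 + |log γ₂| / log γ₁ := by positivity
  calc (s + t : ℝ) ≤ s + (log (σmax / σ₀) + s * |log γ₂|) / log γ₁ := by
        gcongr; rwa [le_div_iff₀ hlog₁]
    _ = s * (1 + |log γ₂| / log γ₁) + (1 / log γ₁) * log (σmax / σ₀) := by ring
    _ ≤ c * (1 + |log γ₂| / log γ₁) + (1 / log γ₁) * log (σmax / σ₀) := by gcongr

theorem total_iterations_bound_general (γ₁ γ₂ σ₀ σmax : ℝ) (hγ₁ : 1 < γ₁)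
    (hγ₂0 : 0 < γ₂) (hσ₀ : 0 < σ₀) (m : ℕ) (σ : ℕ → ℝ)
    (hσ0 : σ 0 = σ₀)
    (S : Finset ℕ)
    (hsucc : ∀ k < m, k ∈ S → γ₂ * σ k ≤ σ (k + 1))
    (hfail : ∀ k < m, k ∉ S → γ₁ * σ k ≤ σ (k + 1))
    (hmax : ∀ k ≤ m, σ k ≤ σmax) :
    (m : ℝ) ≤ (S.card : ℝ) * (1 + |Real.log γ₂| / Real.log γ₁)
      + (1 / Real.log γ₁) * Real.log (σmax / σ₀) := by
  have hgrowth : σ 0 * ∏ k ∈ range m, (if k ∈ S then γ₂ else γ₁) ≤ σ m :=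
    mul_prod_range_le_of_mul_le_succ (fun k _ => by split_ifs <;> positivity)
      (fun k hk => by split_ifs with hkS; exacts [hsucc k hk hkS, hfail k hk hkS])
  rw [prod_ite, prod_const, prod_const, hσ0] at hgrowth
  have hsplit := card_filter_add_card_filter_not (s := range m) (· ∈ S)
  rw [card_range] at hsplit
  have hcount : #{k ∈ range m | k ∈ S} ≤ #S := card_le_card fun k hk => (mem_filter.1 hk).2
  have := natCast_add_le_of_mul_pow_mul_pow_le hγ₁ hγ₂0 hσ₀ hcount
    (hgrowth.trans (hmax m le_rfl))
  rwa [← Nat.cast_add, hsplit] at this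

/-- Bound on the total number of iterations in terms of successful iterations for an
adaptively regularized sequence `σ_k`. -/
theorem total_iterations_bound (γ₁ γ₂ σ₀ σmax : ℝ) (hγ₁ : 1 < γ₁)
    (hγ₂0 : 0 < γ₂) (hγ₂1 : γ₂ < 1) (hσ₀ : 0 < σ₀) (m : ℕ) (σ : ℕ → ℝ)
    (hσpos : ∀ k ≤ m, 0 < σ k) (hσ0 : σ 0 = σ₀)
    (S : Finset ℕ) (hS : S ⊆ Finset.range m)
    (hsucc : ∀ k < m, k ∈ S → γ₂ * σ k ≤ σ (k + 1))
    (hfail : ∀ k < m, k ∉ S → γ₁ * σ k ≤ σ (k + 1))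
    (hmax : ∀ k ≤ m, σ k ≤ σmax) :
    (m : ℝ) ≤ (S.card : ℝ) * (1 + |Real.log γ₂| / Real.log γ₁)
      + (1 / Real.log γ₁) * Real.log (σmax / σ₀) :=
  total_iterations_bound_general γ₁ γ₂ σ₀ σmax hγ₁ hγ₂0 hσ₀ m σ hσ0 S hsucc hfail hmax
end

section
/- Let p ≥ 3 be an integer and ν > 0. Suppose a sequence (Δ_k)_{k≥1} of positive reals satisfies Δ₁ ≤ ν/(p+1) and Δ_k − Δ_{k+1} ≥ C·Δ_k^{(p+1)/p} for all k ≥ 1, where C = (p/(p+1))·ν^{−1/p}. Then for all k ≥ 1, Δ_k ≤ ν·((p+1)^{1/p} + (k−1)/(p+1))^{−p}, and hence Δ_k ≤ ν·((p+1)/k)^p. -/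
/-!
Write `m = ν^{1/p}` and `a_k = Δ_k^{1/p}`. The recursion says `Δ_{k+1} ≤ g(a_k)` with
`g(x) = x^p - p/((p+1)m) x^{p+1}`, and `g` is increasing on `[0, m]`. So the bound
`a_k ≤ m / B_k` propagates: `Δ_{k+1} ≤ g(m/B_k) = (ν/B_k^p)(1 - p/((p+1)B_k))`, and
Bernoulli's inequality turns the last factor into `(B_k/(B_k + 1/(p+1)))^p`, which is the
bound at `k + 1` with `B_{k+1} = B_k + 1/(p+1)`.
-/

open Set

lemma monotoneOn_pow_sub_mul_pow_succ (n : ℕ) {m : ℝ} (hm : 0 < m) :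
    MonotoneOn (fun x : ℝ => x ^ n - n / ((n + 1) * m) * x ^ (n + 1)) (Icc 0 m) := by
  have hderiv : ∀ x : ℝ, HasDerivAt (fun x : ℝ => x ^ n - n / ((n + 1) * m) * x ^ (n + 1))
      (n * x ^ (n - 1) * (1 - x / m)) x := by
    intro x
    refine ((hasDerivAt_pow n x).sub ((hasDerivAt_pow (n + 1) x).const_mul _)).congr_deriv ?_
    rcases n with _ | n
    · simp
    · push_cast
      field_simp
      ring
  refine monotoneOn_of_deriv_nonneg (convex_Icc 0 m) (by fun_prop) (by fun_prop) ?_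
  intro x hx
  rw [interior_Icc] at hx
  rw [(hderiv x).deriv]
  have hx₀ : 0 ≤ x := hx.1.le
  have hxm : 0 ≤ 1 - x / m := by rw [sub_nonneg, div_le_one hm]; exact hx.2.le
  positivity

lemma one_sub_mul_div_le_div_add_pow (n : ℕ) {B δ : ℝ} (hB : 0 < B) (hδ : 0 ≤ δ) :
    1 - n * δ / B ≤ (B / (B + δ)) ^ n := by
  have hBδ : 0 < B + δ := by linarith
  have hδB : δ / (B + δ) ≤ 1 := by rw [div_le_one hBδ]; linarith
  calc 1 - n * δ / B ≤ 1 + n * -(δ / (B + δ)) := by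
        rw [mul_neg, ← sub_eq_add_neg, mul_div_assoc]
        gcongr
        linarith
    _ ≤ (1 + -(δ / (B + δ))) ^ n := one_add_mul_le_pow (by linarith) n
    _ = (B / (B + δ)) ^ n := by congr 1; field_simp; ring

lemma le_div_add_pow_of_le_pow_sub (n : ℕ) {m B a d : ℝ} (hm : 0 < m) (hB : 1 ≤ B)
    (ha : 0 ≤ a) (haB : a ≤ m / B) (hd : d ≤ a ^ n - n / ((n + 1) * m) * a ^ (n + 1)) :
    d ≤ m ^ n / (B + 1 / (n + 1)) ^ n := by
  have hB0 : 0 < B := by linarith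
  have hmB : m / B ≤ m := div_le_self hm.le hB
  have hmono := monotoneOn_pow_sub_mul_pow_succ n hm ⟨ha, haB.trans hmB⟩
    ⟨by positivity, hmB⟩ haB
  have hbern := one_sub_mul_div_le_div_add_pow n hB0 (δ := 1 / (n + 1)) (by positivity)
  calc d ≤ a ^ n - n / ((n + 1) * m) * a ^ (n + 1) := hd
    _ ≤ (m / B) ^ n - n / ((n + 1) * m) * (m / B) ^ (n + 1) := hmono
    _ = m ^ n / B ^ n * (1 - n * (1 / (n + 1)) / B) := by
      rw [div_pow, div_pow]; field_simp; ring
    _ ≤ m ^ n / B ^ n * (B / (B + 1 / (n + 1))) ^ n := by gcongr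
    _ = m ^ n / (B + 1 / (n + 1)) ^ n := by rw [div_pow]; field_simp

lemma le_div_add_pow_of_sub_ge_rpow {p : ℕ} (hp : p ≠ 0) {ν B D D' : ℝ} (hν : 0 < ν)
    (hB : 1 ≤ B) (hD : 0 ≤ D) (hDB : D ≤ ν / B ^ p)
    (hrec : D - D' ≥ ((p : ℝ) / ((p : ℝ) + 1)) * ν ^ (-(1 : ℝ) / p) * D ^ (((p : ℝ) + 1) / p)) :
    D' ≤ ν / (B + 1 / ((p : ℝ) + 1)) ^ p := by
  have hp' : (p : ℝ) ≠ 0 := Nat.cast_ne_zero.mpr hp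
  set m := ν ^ (p⁻¹ : ℝ)
  set a := D ^ (p⁻¹ : ℝ)
  have hm : 0 < m := by positivity
  have hmp : m ^ p = ν := Real.rpow_inv_natCast_pow hν.le hp
  have hap : a ^ p = D := Real.rpow_inv_natCast_pow hD hp
  have hap' : a ^ (p + 1) = D ^ (((p : ℝ) + 1) / p) := by
    rw [← Real.rpow_natCast, ← Real.rpow_mul hD]
    congr 1
    push_cast
    field_simp
  have hνm : ν ^ (-(1 : ℝ) / p) = m⁻¹ := by
    rw [neg_div, Real.rpow_neg hν.le, one_div]
  have haB : a ≤ m / B := by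
    refine le_of_pow_le_pow_left₀ hp (by positivity) ?_
    rwa [hap, div_pow, hmp]
  rw [← hmp]
  refine le_div_add_pow_of_le_pow_sub p hm hB (by positivity) haB ?_
  rw [hνm, ← hap'] at hrec
  rw [hap]
  calc D' ≤ D - (p : ℝ) / ((p : ℝ) + 1) * m⁻¹ * a ^ (p + 1) := by linarith
    _ = D - p / ((p + 1) * m) * a ^ (p + 1) := by field_simp

lemma le_div_add_pow_of_sub_ge {p : ℕ} (hp : p ≠ 0) {ν b₀ : ℝ} (Δ : ℕ → ℝ) (hν : 0 < ν)
    (hb₀ : 1 ≤ b₀) (hnonneg : ∀ k ≥ 1, 0 ≤ Δ k) (h1 : Δ 1 ≤ ν / b₀ ^ p)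
    (hrec : ∀ k ≥ 1, Δ k - Δ (k + 1)
      ≥ ((p : ℝ) / ((p : ℝ) + 1)) * ν ^ (-(1 : ℝ) / p) * Δ k ^ (((p : ℝ) + 1) / p)) :
    ∀ k ≥ 1, Δ k ≤ ν / (b₀ + ((k : ℝ) - 1) / ((p : ℝ) + 1)) ^ p := by
  intro k hk
  induction k, hk using Nat.le_induction with
  | base => simpa using h1
  | succ k hk ih =>
    have hB : 1 ≤ b₀ + ((k : ℝ) - 1) / ((p : ℝ) + 1) := by
      have hk' : (1 : ℝ) ≤ k := by exact_mod_cast hk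
      have hshift : 0 ≤ ((k : ℝ) - 1) / ((p : ℝ) + 1) := by positivity
      linarith
    convert le_div_add_pow_of_sub_ge_rpow hp hν hB (hnonneg k hk) ih (hrec k hk) using 3
    push_cast
    ring

/-- Sublinear rate for the strongly convex analysis: if `Δ₁ ≤ ν/(p+1)` and
`Δ_k - Δ_{k+1} ≥ C Δ_k^{(p+1)/p}` with `C = (p/(p+1)) ν^{-1/p}`, then
`Δ_k ≤ ν ((p+1)^{1/p} + (k-1)/(p+1))^{-p} ≤ ν ((p+1)/k)^p`. -/
theorem strongly_convex_rate (p : ℕ) (hp : 3 ≤ p) (ν : ℝ) (hν : 0 < ν)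
    (Δ : ℕ → ℝ) (hpos : ∀ k ≥ 1, 0 < Δ k) (h1 : Δ 1 ≤ ν / ((p : ℝ) + 1))
    (hrec : ∀ k ≥ 1, Δ k - Δ (k + 1)
      ≥ ((p : ℝ) / ((p : ℝ) + 1)) * ν ^ (-(1 : ℝ) / p) * Δ k ^ (((p : ℝ) + 1) / p)) :
    ∀ k ≥ 1,
      Δ k ≤ ν * (((p : ℝ) + 1) ^ ((1 : ℝ) / p) + ((k : ℝ) - 1) / ((p : ℝ) + 1)) ^ (-(p : ℝ)) ∧
      Δ k ≤ ν * (((p : ℝ) + 1) / (k : ℝ)) ^ (p : ℕ) := by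
  intro k hk
  have hp0 : p ≠ 0 := by omega
  set b₀ := ((p : ℝ) + 1) ^ ((1 : ℝ) / p)
  have hb₀ : 1 ≤ b₀ := Real.one_le_rpow (by linarith) (by positivity)
  have hb₀p : b₀ ^ p = (p : ℝ) + 1 := by
    simpa only [b₀, one_div] using Real.rpow_inv_natCast_pow (by positivity) hp0
  have hbound := le_div_add_pow_of_sub_ge hp0 Δ hν hb₀ (fun k hk => (hpos k hk).le)
    (hb₀p ▸ h1) hrec k hk
  have hk' : (1 : ℝ) ≤ k := by exact_mod_cast hk
  have hkB : (k : ℝ) / ((p : ℝ) + 1) ≤ b₀ + ((k : ℝ) - 1) / ((p : ℝ) + 1) := by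
    have hstep : 1 / ((p : ℝ) + 1) ≤ 1 := by rw [div_le_one (by positivity)]; linarith
    rw [show (k : ℝ) / ((p : ℝ) + 1) = 1 / ((p : ℝ) + 1) + ((k : ℝ) - 1) / ((p : ℝ) + 1) by ring]
    gcongr
    exact hstep.trans hb₀
  constructor
  · rwa [Real.rpow_neg (by positivity), Real.rpow_natCast, ← div_eq_mul_inv]
  · calc Δ k ≤ ν / (b₀ + ((k : ℝ) - 1) / ((p : ℝ) + 1)) ^ p := hbound
      _ ≤ ν / ((k : ℝ) / ((p : ℝ) + 1)) ^ p := by gcongr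
      _ = ν * (((p : ℝ) + 1) / (k : ℝ)) ^ p := by rw [div_pow, div_pow]; field_simp
end

section
/- Let μ₁ > 0, p ≥ 1, and suppose (μ_k)_{k≥1} satisfies μ_k − μ_{k+1} ≥ μ_k^{(p+1)/p} for all k ≥ 1 and μ_k > 0. Then μ_k^{−1/p} ≥ μ₁^{−1/p} + (k−1)/p for all k ≥ 1, i.e., μ_k ≤ (μ₁^{−1/p} + (k−1)/p)^{−p}. -/
open Real

lemma aux_step_rate (p : ℝ) (hp : 1 ≤ p) {a b : ℝ} (ha : 0 < a) (hb : 0 < b)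
    (h : b ≤ a - a ^ ((p + 1) / p)) :
    a ^ (-(1 / p)) + 1 / p ≤ b ^ (-(1 / p)) := by
  have hp0 : 0 < p := lt_of_lt_of_le one_pos hp
  set t := a ^ (1 / p) with ht
  have htpos : 0 < t := rpow_pos_of_pos ha _
  have hexp : (p + 1) / p = 1 + 1 / p := by field_simp
  have hap : a ^ ((p + 1) / p) = a * t := by
    rw [hexp, rpow_add ha, rpow_one]
  have hble : b ≤ a * (1 - t) := by nlinarith [hap ▸ h]
  have h1t : 0 < 1 - t := by
    by_contra hcon
    push_neg at hcon
    nlinarith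
  have hainv : a ^ (-(1 / p)) = t⁻¹ := by
    rw [rpow_neg ha.le, ht]
  -- key inequality : 1 + t/p ≤ (1-t) ^ (-(1/p))
  have hlog : Real.log (1 + t / p) * p ≤ t := by
    have h1 : Real.log (1 + t / p) ≤ t / p := by
      have := Real.log_le_sub_one_of_pos (x := 1 + t / p) (by positivity)
      linarith
    calc Real.log (1 + t / p) * p ≤ (t / p) * p := by
          exact mul_le_mul_of_nonneg_right h1 hp0.le
      _ = t := by field_simp
  have hpow_exp : (1 + t / p) ^ p ≤ Real.exp t := by
    rw [rpow_def_of_pos (by positivity)]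
    exact Real.exp_le_exp.mpr hlog
  have hexp_inv : Real.exp t ≤ (1 - t)⁻¹ := by
    have h2 : 1 - t ≤ Real.exp (-t) := by
      have := Real.add_one_le_exp (-t); linarith
    have h3 : (1 - t) * Real.exp t ≤ 1 := by
      have h4 : Real.exp (-t) * Real.exp t = 1 := by
        rw [← Real.exp_add]; simp
      nlinarith [Real.exp_pos t]
    have h5 : (1 - t) * (1 - t)⁻¹ = 1 := mul_inv_cancel₀ h1t.ne'
    nlinarith [Real.exp_pos t]
  have hkey : 1 + t / p ≤ (1 - t) ^ (-(1 / p)) := by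
    have h6 : (1 + t / p) ^ p ≤ (1 - t)⁻¹ := le_trans hpow_exp hexp_inv
    have h7 : ((1 + t / p) ^ p) ^ (1 / p) ≤ ((1 - t)⁻¹) ^ (1 / p) := by
      apply rpow_le_rpow (by positivity) h6 (by positivity)
    rw [← rpow_mul (by positivity : (0:ℝ) ≤ 1 + t / p)] at h7
    rw [mul_one_div, div_self hp0.ne'] at h7
    rw [rpow_one] at h7
    calc 1 + t / p ≤ ((1 - t)⁻¹) ^ (1 / p) := h7
      _ = (1 - t) ^ (-(1 / p)) := by
          rw [← rpow_neg_one (1 - t), ← rpow_mul h1t.le]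
          ring_nf
  -- combine
  have hbstep : (a * (1 - t)) ^ (-(1 / p)) ≤ b ^ (-(1 / p)) :=
    rpow_le_rpow_of_nonpos hb hble (neg_nonpos.mpr (by positivity))
  have hsplit : (a * (1 - t)) ^ (-(1 / p)) = t⁻¹ * (1 - t) ^ (-(1 / p)) := by
    rw [mul_rpow ha.le h1t.le, hainv]
  have : t⁻¹ + 1 / p ≤ t⁻¹ * (1 - t) ^ (-(1 / p)) := by
    have := mul_le_mul_of_nonneg_left hkey (inv_pos.mpr htpos).le
    calc t⁻¹ + 1 / p = t⁻¹ * (1 + t / p) := by field_simp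
      _ ≤ t⁻¹ * (1 - t) ^ (-(1 / p)) := this
  rw [hainv]
  linarith [hsplit ▸ hbstep]

/-- Core recursive-inequality lemma: if `μ_k - μ_{k+1} ≥ μ_k^{(p+1)/p}` for a positive
sequence, then `μ_k^{-1/p} ≥ μ₁^{-1/p} + (k-1)/p`, i.e.
`μ_k ≤ (μ₁^{-1/p} + (k-1)/p)^{-p}`. -/
theorem recursive_inequality_rate (p : ℝ) (hp : 1 ≤ p) (μ : ℕ → ℝ)
    (hpos : ∀ k ≥ 1, 0 < μ k)
    (hrec : ∀ k ≥ 1, μ k - μ (k + 1) ≥ μ k ^ ((p + 1) / p)) :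
    ∀ k ≥ 1,
      μ k ^ (-(1 / p)) ≥ μ 1 ^ (-(1 / p)) + ((k : ℝ) - 1) / p ∧
      μ k ≤ (μ 1 ^ (-(1 / p)) + ((k : ℝ) - 1) / p) ^ (-p) := by
  have hp0 : 0 < p := lt_of_lt_of_le one_pos hp
  have part1 : ∀ k ≥ 1, μ k ^ (-(1 / p)) ≥ μ 1 ^ (-(1 / p)) + ((k : ℝ) - 1) / p := by
    intro k hk
    induction k, hk using Nat.le_induction with
    | base => simp
    | succ n hn ih =>
        have hstep : μ n ^ (-(1 / p)) + 1 / p ≤ μ (n + 1) ^ (-(1 / p)) := by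
          apply aux_step_rate p hp (hpos n hn) (hpos (n + 1) (by omega))
          linarith [hrec n hn]
        push_cast
        have : ((n : ℝ) + 1 - 1) / p = ((n : ℝ) - 1) / p + 1 / p := by ring
        rw [this]
        linarith
  intro k hk
  refine ⟨part1 k hk, ?_⟩
  have hμk := hpos k hk
  have hc : 0 < μ 1 ^ (-(1 / p)) + ((k : ℝ) - 1) / p := by
    have h1 : (0:ℝ) < μ 1 ^ (-(1 / p)) := rpow_pos_of_pos (hpos 1 le_rfl) _
    have h2 : (0:ℝ) ≤ ((k : ℝ) - 1) / p := by
      apply div_nonneg _ hp0.le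
      have : (1:ℝ) ≤ (k:ℝ) := by exact_mod_cast hk
      linarith
    linarith
  have hμeq : (μ k ^ (-(1 / p))) ^ (-p) = μ k := by
    rw [← rpow_mul hμk.le]
    have : -(1 / p) * -p = 1 := by field_simp
    rw [this, rpow_one]
  calc μ k = (μ k ^ (-(1 / p))) ^ (-p) := hμeq.symm
    _ ≤ (μ 1 ^ (-(1 / p)) + ((k : ℝ) - 1) / p) ^ (-p) :=
        rpow_le_rpow_of_nonpos hc (part1 k hk) (by linarith)
end

section
/- Let f(x) − T(s) ≥ (σ/p')·∥s∥^{p'} with σ > 0, and suppose |f(x+s) − T(s)| ≤ (L/(p+1))·∥s∥^{p+1}. Define ρ = (f(x) − f(x+s))/(f(x) − T(s)). If σ ≥ (L·p')/((p+1)·(1−η))·∥s∥^{p+1−p'} for some η ∈ (0,1), then ρ ≥ η. -/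
/-!
Write `ρ = (f(x) - f(x+s)) / (f(x) - T(s))`. Then `ρ - 1 = (T(s) - f(x+s)) / (f(x) - T(s))`, so
`|ρ - 1|` is the Taylor error relative to the model decrease. The Taylor error is at most
`L/(p+1) ∥s∥^{p+1}`, the model decrease at least `σ/p' ∥s∥^{p'}`, and the lower bound on `σ` makes
the quotient of these two at most `1 - η`; hence `ρ ≥ 1 - (1 - η) = η`.
-/

lemma abs_div_sub_one_le_of_abs_sub_le {a b c ε : ℝ} (hab : 0 < a - b)
    (h : |c - b| ≤ ε * (a - b)) : |(a - c) / (a - b) - 1| ≤ ε := by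
  have hquot : (a - c) / (a - b) - 1 = (b - c) / (a - b) := by
    field_simp
    ring
  rw [hquot, abs_div, abs_of_pos hab, div_le_iff₀ hab, abs_sub_comm]
  exact h

lemma Real.rpow_natCast_add_one_sub_natCast {t : ℝ} (ht : t ≠ 0) (m n : ℕ) :
    t ^ ((m : ℝ) + 1 - n) = t ^ (m + 1) / t ^ n := by
  rw [Real.rpow_sub_natCast ht, ← Real.rpow_natCast t (m + 1), Nat.cast_succ]

lemma taylor_bound_le_mul_regularization {L σ a b ε u v : ℝ} (ha : 0 < a) (hb : 0 < b) (hε : 0 < ε)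
    (hv : 0 < v) (hσ : σ ≥ L * b / (a * ε) * (u / v)) : L / a * u ≤ ε * (σ / b * v) := by
  have hσ' : L * b * u ≤ σ * (a * ε) * v := by
    rw [ge_iff_le, div_mul_div_comm, div_le_iff₀ (by positivity)] at hσ
    linarith
  rw [div_mul_eq_mul_div, div_le_iff₀ ha, show ε * (σ / b * v) * a = σ * (a * ε) * v / b by
    field_simp, le_div_iff₀ hb]
  linarith

theorem successful_iteration_condition_general (p p' : ℕ) (hp' : p + 1 ≤ p')
    (L σ η t fx Tval fxs : ℝ) (hσ : 0 < σ) (ht : 0 < t)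
    (hη1 : η < 1)
    (hmodel : fx - Tval ≥ σ / (p' : ℝ) * t ^ p')
    (herr : |fxs - Tval| ≤ L / ((p : ℝ) + 1) * t ^ (p + 1))
    (hσbig : σ ≥ L * (p' : ℝ) / (((p : ℝ) + 1) * (1 - η)) * t ^ (((p : ℝ) + 1) - (p' : ℝ))) :
    (fx - fxs) / (fx - Tval) ≥ η := by
  have hp'pos : (0 : ℝ) < p' := by exact_mod_cast (show 0 < p' by omega)
  have h1η : 0 < 1 - η := by linarith
  have hdecrease : 0 < fx - Tval := lt_of_lt_of_le (by positivity) hmodel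
  rw [Real.rpow_natCast_add_one_sub_natCast ht.ne'] at hσbig
  have herr_rel : |fxs - Tval| ≤ (1 - η) * (fx - Tval) :=
    calc |fxs - Tval| ≤ L / ((p : ℝ) + 1) * t ^ (p + 1) := herr
      _ ≤ (1 - η) * (σ / (p' : ℝ) * t ^ p') :=
        taylor_bound_le_mul_regularization (by positivity) hp'pos h1η (by positivity) hσbig
      _ ≤ (1 - η) * (fx - Tval) := mul_le_mul_of_nonneg_left hmodel h1η.le
  have hρ := abs_le.mp (abs_div_sub_one_le_of_abs_sub_le hdecrease herr_rel)
  linarith [hρ.1]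

/-- Sufficient condition for a successful iteration: if the model decrease dominates
the regularization term, the Taylor error bound holds, and `σ` is large enough, then
the ratio of actual to predicted decrease satisfies `ρ ≥ η`. -/
theorem successful_iteration_condition (p p' : ℕ) (hp : 1 ≤ p) (hp' : p + 1 ≤ p')
    (L σ η t fx Tval fxs : ℝ) (hσ : 0 < σ) (ht : 0 < t)
    (hη0 : 0 < η) (hη1 : η < 1)
    (hmodel : fx - Tval ≥ σ / (p' : ℝ) * t ^ p')
    (herr : |fxs - Tval| ≤ L / ((p : ℝ) + 1) * t ^ (p + 1))
    (hσbig : σ ≥ L * (p' : ℝ) / (((p : ℝ) + 1) * (1 - η)) * t ^ (((p : ℝ) + 1) - (p' : ℝ))) :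
    (fx - fxs) / (fx - Tval) ≥ η :=
  successful_iteration_condition_general p p' hp' L σ η t fx Tval fxs hσ ht hη1 hmodel herr hσbig
end

section
/- Let H be symmetric n×n, 𝒯 a symmetric 3-tensor on ℝⁿ, σ ≥ 0, and suppose the function m(s) = f₀ + gᵀs + (1/2)·H[s]² + (1/6)·𝒯[s]³ + (σ/4)·∥s∥⁴ is convex on ℝⁿ. Then for every s ∈ ℝⁿ: (4/9)·H[s]² + (1/3)·𝒯[s]³ + (3σ/4)·∥s∥⁴ ≥ 0. -/
set_option maxHeartbeats 1000000


open scoped InnerProductSpace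

/-- Consequence of convexity of the quartically regularized cubic model: for every `s`,
`(4/9)H[s]² + (1/3)𝒯[s]³ + (3σ/4)‖s‖⁴ ≥ 0`. -/
theorem cubic_model_convexity_inequality {n : ℕ} (f₀ σ : ℝ) (hσ : 0 ≤ σ)
    (g : EuclideanSpace ℝ (Fin n))
    (H : EuclideanSpace ℝ (Fin n) →L[ℝ] EuclideanSpace ℝ (Fin n))
    (hHsym : ∀ u v, ⟪H u, v⟫_ℝ = ⟪u, H v⟫_ℝ)
    (T3 : ContinuousMultilinearMap ℝ (fun _ : Fin 3 => EuclideanSpace ℝ (Fin n)) ℝ)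
    (hT3sym : ∀ (v : Fin 3 → EuclideanSpace ℝ (Fin n)) (e : Equiv.Perm (Fin 3)),
      T3 (v ∘ e) = T3 v)
    (hconv : ConvexOn ℝ Set.univ (fun s : EuclideanSpace ℝ (Fin n) =>
      f₀ + ⟪g, s⟫_ℝ + (1 / 2) * ⟪s, H s⟫_ℝ + (1 / 6) * T3 (fun _ => s)
        + σ / 4 * ‖s‖ ^ 4)) :
    ∀ s : EuclideanSpace ℝ (Fin n),
      (4 / 9) * ⟪s, H s⟫_ℝ + (1 / 3) * T3 (fun _ => s) + (3 * σ / 4) * ‖s‖ ^ 4 ≥ 0 := by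
  intro s
  set a := ⟪g, s⟫_ℝ with ha
  set b := ⟪s, H s⟫_ℝ with hb
  set c := T3 (fun _ => s) with hc
  set d := ‖s‖ ^ 4 with hdd
  have hd0 : 0 ≤ d := by positivity
  -- polynomial expansion of the model along the ray t • s
  have key : ∀ t : ℝ,
      f₀ + ⟪g, t • s⟫_ℝ + (1 / 2) * ⟪t • s, H (t • s)⟫_ℝ
        + (1 / 6) * T3 (fun _ => t • s) + σ / 4 * ‖t • s‖ ^ 4
      = f₀ + a * t + (1 / 2) * b * t ^ 2 + (1 / 6) * c * t ^ 3 + σ / 4 * d * t ^ 4 := by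
    intro t
    have h1 : ⟪g, t • s⟫_ℝ = t * a := real_inner_smul_right g s t
    have h2 : ⟪t • s, H (t • s)⟫_ℝ = t ^ 2 * b := by
      rw [map_smul, real_inner_smul_left, real_inner_smul_right, ← hb]; ring
    have h3 : T3 (fun _ => t • s) = t ^ 3 * c := by
      have := T3.map_smul_univ (fun _ : Fin 3 => t) (fun _ => s)
      simpa [smul_eq_mul, ← hc, pow_succ] using this
    have h4 : ‖t • s‖ ^ 4 = t ^ 4 * d := by
      rw [norm_smul, mul_pow, hdd]
      have : |t| ^ 4 = t ^ 4 := by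
        rw [← abs_pow, abs_of_nonneg (by positivity : (0:ℝ) ≤ t ^ 4)]
      simp [Real.norm_eq_abs, this]
    rw [h1, h2, h3, h4]; ring
  by_contra hlt
  push_neg at hlt
  set e := σ * d with he
  have he0 : 0 ≤ e := mul_nonneg hσ hd0
  set X := b + (3 / 4) * c + (27 / 16) * e with hX'
  have hX : X < 0 := by rw [hX', he]; nlinarith [hlt]
  set h := Real.sqrt (-X / (e + 1)) with hhdef
  have hq : h ^ 2 = -X / (e + 1) := by
    rw [hhdef, sq, Real.mul_self_sqrt]
    apply div_nonneg <;> linarith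
  have hq' : h ^ 2 * (e + 1) = -X := by
    rw [hq]; field_simp
  -- midpoint convexity at t = 3/4 with increment h
  have hmid := hconv.2 (Set.mem_univ ((3 / 4 + h) • s)) (Set.mem_univ ((3 / 4 - h) • s))
    (by norm_num : (0:ℝ) ≤ 1 / 2) (by norm_num : (0:ℝ) ≤ 1 / 2) (by norm_num)
  have hmidpt : (1 / 2 : ℝ) • ((3 / 4 + h) • s) + (1 / 2 : ℝ) • ((3 / 4 - h) • s)
      = (3 / 4 : ℝ) • s := by
    rw [smul_smul, smul_smul, ← add_smul]; ring_nf
  rw [hmidpt] at hmid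
  simp only [smul_eq_mul] at hmid
  rw [key (3 / 4), key (3 / 4 + h), key (3 / 4 - h)] at hmid
  -- hmid is now a polynomial inequality; it reduces to 0 ≤ X h² + (e/2) h⁴
  have hineq : 0 ≤ X * h ^ 2 + e / 2 * h ^ 4 := by
    rw [hX', he]; nlinarith [hmid]
  have h2pos : 0 < h ^ 2 := by nlinarith [hq', hX, he0]
  have hXq : X = -(h ^ 2 * (e + 1)) := by linarith
  rw [hXq] at hineq
  nlinarith [hineq, he0, h2pos, mul_pos h2pos h2pos,
    mul_nonneg he0 (le_of_lt (mul_pos h2pos h2pos))]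
end

section
/- Let H be symmetric n×n with H ⪰ δ·I for δ > 0, 𝒯 a symmetric 3-tensor, σ ≥ 0, and suppose m(s) = f₀ + gᵀs + (1/2)·H[s]² + (1/6)·𝒯[s]³ + (σ/4)·∥s∥⁴ is convex. If s* satisfies ∇m(s*) = 0, then f₀ − T₃(s*) ≥ (δ/18)·∥s*∥², where T₃(s) = f₀ + gᵀs + (1/2)·H[s]² + (1/6)·𝒯[s]³. -/
set_option maxHeartbeats 1000000


open scoped InnerProductSpace

/-- Improved decrease bound for `p = 3` in locally strongly convex iterations:
if `H ⪰ δI`, the regularized cubic model is convex and `∇m(s*) = 0`, then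
`f₀ - T₃(s*) ≥ (δ/18)‖s*‖²`. -/
theorem cubic_model_improved_decrease {n : ℕ} (f₀ σ δ : ℝ) (hσ : 0 ≤ σ) (hδ : 0 < δ)
    (g sstar : EuclideanSpace ℝ (Fin n))
    (H : EuclideanSpace ℝ (Fin n) →L[ℝ] EuclideanSpace ℝ (Fin n))
    (hHsym : ∀ u v, ⟪H u, v⟫_ℝ = ⟪u, H v⟫_ℝ)
    (hHpos : ∀ v, ⟪v, H v⟫_ℝ ≥ δ * ‖v‖ ^ 2)
    (T3 : ContinuousMultilinearMap ℝ (fun _ : Fin 3 => EuclideanSpace ℝ (Fin n)) ℝ)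
    (hT3sym : ∀ (v : Fin 3 → EuclideanSpace ℝ (Fin n)) (e : Equiv.Perm (Fin 3)),
      T3 (v ∘ e) = T3 v)
    (hconv : ConvexOn ℝ Set.univ (fun s : EuclideanSpace ℝ (Fin n) =>
      f₀ + ⟪g, s⟫_ℝ + (1 / 2) * ⟪s, H s⟫_ℝ + (1 / 6) * T3 (fun _ => s)
        + σ / 4 * ‖s‖ ^ 4))
    (hgrad : ∀ v, ⟪g, v⟫_ℝ + ⟪H sstar, v⟫_ℝ + (1 / 2) * T3 ![sstar, sstar, v]
      + σ * ‖sstar‖ ^ 2 * ⟪sstar, v⟫_ℝ = 0) :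
    f₀ - (f₀ + ⟪g, sstar⟫_ℝ + (1 / 2) * ⟪sstar, H sstar⟫_ℝ
        + (1 / 6) * T3 (fun _ => sstar))
      ≥ δ / 18 * ‖sstar‖ ^ 2 := by
  set s := sstar with hs
  set b : ℝ := ⟪s, H s⟫_ℝ with hb
  set c : ℝ := T3 (fun _ => s) with hc
  set d : ℝ := σ * ‖s‖ ^ 4 with hd
  have hd0 : 0 ≤ d := by positivity
  -- gradient identity at v = s
  have hvec : (![s, s, s] : Fin 3 → EuclideanSpace ℝ (Fin n)) = fun _ => s := by
    funext i; fin_cases i <;> rfl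
  have hgs : ⟪g, s⟫_ℝ = -(b + (1/2) * c + d) := by
    have h := hgrad s
    rw [hvec] at h
    have h1 : ⟪H s, s⟫_ℝ = b := by rw [hb, hHsym]
    have h2 : ⟪s, s⟫_ℝ = ‖s‖ ^ 2 := real_inner_self_eq_norm_sq s
    rw [h1, h2] at h
    rw [hd]; nlinarith [h]
  -- evaluate the model along the line t ↦ t • s
  have hm : ∀ t : ℝ,
      f₀ + ⟪g, t • s⟫_ℝ + (1 / 2) * ⟪t • s, H (t • s)⟫_ℝ
        + (1 / 6) * T3 (fun _ => t • s) + σ / 4 * ‖t • s‖ ^ 4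
      = f₀ + t * ⟪g, s⟫_ℝ + (1/2) * t^2 * b + (1/6) * t^3 * c + (1/4) * t^4 * d := by
    intro t
    have h1 : ⟪g, t • s⟫_ℝ = t * ⟪g, s⟫_ℝ := real_inner_smul_right g s t
    have h2 : ⟪t • s, H (t • s)⟫_ℝ = t^2 * b := by
      rw [map_smul, real_inner_smul_left, real_inner_smul_right, hb]; ring
    have h3 : T3 (fun _ => t • s) = t^3 * c := by
      have := T3.map_smul_univ (fun _ : Fin 3 => t) (fun _ => s)
      simp only [Finset.prod_const, Finset.card_univ, Fintype.card_fin,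
        smul_eq_mul] at this
      rw [hc]
      convert this using 2
    have h4 : ‖t • s‖ ^ 4 = t^4 * ‖s‖ ^ 4 := by
      rw [norm_smul, mul_pow, Real.norm_eq_abs, (by decide : Even 4).pow_abs]
    rw [h1, h2, h3, h4, hd]; ring
  -- convexity inequality along the line
  have key : ∀ h : ℝ, 0 ≤ h^2 * (b + (3/4) * c + 3 * d * (3/4)^2) + (d/2) * h^4 := by
    intro h
    have hc2 := hconv.2 (Set.mem_univ ((3/4 - h) • s)) (Set.mem_univ ((3/4 + h) • s))
      (by norm_num : (0:ℝ) ≤ 1/2) (by norm_num : (0:ℝ) ≤ 1/2) (by norm_num)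
    have hpt : (1/2 : ℝ) • ((3/4 - h) • s) + (1/2 : ℝ) • ((3/4 + h) • s)
        = (3/4 : ℝ) • s := by
      rw [smul_smul, smul_smul, ← add_smul]; ring_nf
    rw [hpt] at hc2
    simp only [smul_eq_mul] at hc2
    rw [hm (3/4 - h), hm (3/4 + h), hm (3/4)] at hc2
    nlinarith [hc2]
  have hQ : 0 ≤ b + (3/4) * c + (27/16) * d := by
    by_contra hneg
    push_neg at hneg
    set Q : ℝ := b + (3/4) * c + (27/16) * d with hQdef
    have hQneg : Q < 0 := hneg
    set e : ℝ := min 1 (-Q / (d + 1)) with he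
    have he0 : 0 < e := by
      apply lt_min one_pos
      apply div_pos (by linarith) (by linarith)
    have heQ : (d/2) * e < -Q := by
      have h1 : e ≤ -Q / (d + 1) := min_le_right _ _
      have h2 : (d/2) * e ≤ (d/2) * (-Q / (d + 1)) := by
        apply mul_le_mul_of_nonneg_left h1 (by linarith)
      have h3 : (d/2) * (-Q / (d + 1)) < -Q := by
        rw [mul_div_assoc', div_lt_iff₀ (by linarith : (0:ℝ) < d + 1)]
        have := mul_pos (neg_pos.mpr hQneg) (show (0:ℝ) < d/2 + 1 by linarith)
        nlinarith [this]
      linarith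
    have hk := key (Real.sqrt e)
    rw [show (Real.sqrt e)^4 = ((Real.sqrt e)^2)^2 by ring,
      Real.sq_sqrt he0.le] at hk
    nlinarith [hk, he0, heQ, hQneg]
  have hbpos := hHpos s
  rw [hgs]
  linarith [hQ, hbpos, hd0]
end

section
/- Let H be symmetric n×n with H ⪰ δ·I (δ > 0), 𝒯, ℳ, 𝒩 symmetric tensors of orders 3, 4, 5 on ℝⁿ, σ ≥ 0, and suppose m(s) = f₀ + gᵀs + (1/2)H[s]² + (1/6)𝒯[s]³ + (1/24)ℳ[s]⁴ + (1/120)𝒩[s]⁵ + (σ/6)∥s∥⁶ is convex. If s* satisfies ∇m(s*) = 0 and 𝒩[s*]⁵ ≥ 0, then f₀ − T₅(s*) ≥ (δ/18)·∥s*∥², where T₅ is the quintic Taylor part f₀ + gᵀs + (1/2)H[s]² + (1/6)𝒯[s]³ + (1/24)ℳ[s]⁴ + (1/120)𝒩[s]⁵. -/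
/-!
Restrict the model to the ray `τ ↦ τ • s*`: there it is a sextic polynomial in `τ`, still convex,
so its second derivative at `τ = 3/4` is nonnegative. Together with the first-order condition
`∇m(s*)[s*] = 0`, which eliminates `⟪g, s*⟫`, a combination of the two (with weight `4/9` on the
curvature inequality) leaves `f₀ - T₅(s*) ≥ H[s*]²/18 + 𝒩[s*]⁵/480 + 19σ‖s*‖⁶/64`.
-/

open Set
open scoped InnerProductSpace Polynomial
open Polynomial (C X)

theorem Polynomial.eval_derivative_derivative_nonneg_of_convexOn {p : ℝ[X]}
    (hp : ConvexOn ℝ univ fun x => p.eval x) (x : ℝ) :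
    0 ≤ p.derivative.derivative.eval x := by
  have hderiv : deriv (fun x => p.eval x) = fun x => p.derivative.eval x := by
    ext
    exact p.deriv
  have hmono : Monotone fun x => p.derivative.eval x := by
    rw [← hderiv, ← monotoneOn_univ]
    exact hp.monotoneOn_deriv fun y _ => p.differentiableAt
  simpa only [p.derivative.deriv] using hmono.deriv_nonneg (x := x)

theorem ContinuousMultilinearMap.apply_const_smul {R M N : Type*} [CommSemiring R]
    [AddCommMonoid M] [AddCommMonoid N] [Module R M] [Module R N] [TopologicalSpace M]
    [TopologicalSpace N] {k : ℕ} (f : ContinuousMultilinearMap R (fun _ : Fin k => M) N)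
    (c : R) (x : M) : f (fun _ => c • x) = c ^ k • f (fun _ => x) := by
  simpa using f.map_smul_univ (fun _ => c) (fun _ => x)

theorem quintic_model_improved_decrease_general {n : ℕ} (f₀ σ δ : ℝ) (hσ : 0 ≤ σ)
    (g sstar : EuclideanSpace ℝ (Fin n))
    (H : EuclideanSpace ℝ (Fin n) →L[ℝ] EuclideanSpace ℝ (Fin n))
    (hHpos : ∀ v, ⟪v, H v⟫_ℝ ≥ δ * ‖v‖ ^ 2)
    (T3 : ContinuousMultilinearMap ℝ (fun _ : Fin 3 => EuclideanSpace ℝ (Fin n)) ℝ)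
    (M4 : ContinuousMultilinearMap ℝ (fun _ : Fin 4 => EuclideanSpace ℝ (Fin n)) ℝ)
    (N5 : ContinuousMultilinearMap ℝ (fun _ : Fin 5 => EuclideanSpace ℝ (Fin n)) ℝ)
    (hconv : ConvexOn ℝ Set.univ (fun s : EuclideanSpace ℝ (Fin n) =>
      f₀ + ⟪g, s⟫_ℝ + (1 / 2) * ⟪s, H s⟫_ℝ + (1 / 6) * T3 (fun _ => s)
        + (1 / 24) * M4 (fun _ => s) + (1 / 120) * N5 (fun _ => s)
        + σ / 6 * ‖s‖ ^ 6))
    (hgrad : ∀ v, ⟪g, v⟫_ℝ + ⟪H sstar, v⟫_ℝ + (1 / 2) * T3 ![sstar, sstar, v]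
      + (1 / 6) * M4 ![sstar, sstar, sstar, v]
      + (1 / 24) * N5 ![sstar, sstar, sstar, sstar, v]
      + σ * ‖sstar‖ ^ 4 * ⟪sstar, v⟫_ℝ = 0)
    (hN : N5 (fun _ => sstar) ≥ 0) :
    f₀ - (f₀ + ⟪g, sstar⟫_ℝ + (1 / 2) * ⟪sstar, H sstar⟫_ℝ
        + (1 / 6) * T3 (fun _ => sstar) + (1 / 24) * M4 (fun _ => sstar)
        + (1 / 120) * N5 (fun _ => sstar))
      ≥ δ / 18 * ‖sstar‖ ^ 2 := by
  set p : ℝ[X] := C f₀ + C ⟪g, sstar⟫_ℝ * X + C (⟪sstar, H sstar⟫_ℝ / 2) * X ^ 2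
    + C (T3 (fun _ => sstar) / 6) * X ^ 3 + C (M4 (fun _ => sstar) / 24) * X ^ 4
    + C (N5 (fun _ => sstar) / 120) * X ^ 5 + C (σ * ‖sstar‖ ^ 6 / 6) * X ^ 6
  have hray : ConvexOn ℝ univ fun τ => p.eval τ := by
    have hline := hconv.comp_linearMap (LinearMap.toSpanSingleton ℝ _ sstar)
    rw [preimage_univ] at hline
    refine hline.congr fun τ _ => ?_
    simp only [Function.comp_apply, LinearMap.toSpanSingleton_apply, map_smul,
      real_inner_smul_left, real_inner_smul_right, ContinuousMultilinearMap.apply_const_smul,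
      smul_eq_mul, norm_smul, Real.norm_eq_abs, mul_pow, (by decide : Even 6).pow_abs,
      Polynomial.eval_add, Polynomial.eval_mul, Polynomial.eval_C, Polynomial.eval_X,
      Polynomial.eval_pow, p]
    ring
  have hcurv : 0 ≤ ⟪sstar, H sstar⟫_ℝ + 3 / 4 * T3 (fun _ => sstar)
      + 9 / 32 * M4 (fun _ => sstar) + 9 / 128 * N5 (fun _ => sstar)
      + 405 / 256 * (σ * ‖sstar‖ ^ 6) := by
    have h := p.eval_derivative_derivative_nonneg_of_convexOn hray (3 / 4)
    simp only [p, map_add, Polynomial.derivative_C_mul_X_pow, Polynomial.derivative_C_mul_X,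
      Polynomial.derivative_C, Polynomial.eval_add, Polynomial.eval_C, Polynomial.eval_zero,
      Polynomial.eval_mul, Polynomial.eval_pow, Polynomial.eval_X] at h
    norm_num at h
    linarith
  have hstat := hgrad sstar
  simp only [Matrix.vec_single_eq_const, Matrix.vecCons_const, real_inner_comm sstar (H sstar),
    real_inner_self_eq_norm_sq] at hstat
  have hreg : 0 ≤ σ * ‖sstar‖ ^ 6 := by positivity
  have hH := hHpos sstar
  linarith

/-- Improved decrease bound for `p = 5` (Scenario I): if `H ⪰ δI`, the sextically
regularized quintic model is convex, `∇m(s*) = 0` and `𝒩[s*]⁵ ≥ 0`, then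
`f₀ - T₅(s*) ≥ (δ/18)‖s*‖²`. -/
theorem quintic_model_improved_decrease {n : ℕ} (f₀ σ δ : ℝ) (hσ : 0 ≤ σ) (hδ : 0 < δ)
    (g sstar : EuclideanSpace ℝ (Fin n))
    (H : EuclideanSpace ℝ (Fin n) →L[ℝ] EuclideanSpace ℝ (Fin n))
    (hHsym : ∀ u v, ⟪H u, v⟫_ℝ = ⟪u, H v⟫_ℝ)
    (hHpos : ∀ v, ⟪v, H v⟫_ℝ ≥ δ * ‖v‖ ^ 2)
    (T3 : ContinuousMultilinearMap ℝ (fun _ : Fin 3 => EuclideanSpace ℝ (Fin n)) ℝ)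
    (hT3sym : ∀ (v : Fin 3 → EuclideanSpace ℝ (Fin n)) (e : Equiv.Perm (Fin 3)),
      T3 (v ∘ e) = T3 v)
    (M4 : ContinuousMultilinearMap ℝ (fun _ : Fin 4 => EuclideanSpace ℝ (Fin n)) ℝ)
    (hM4sym : ∀ (v : Fin 4 → EuclideanSpace ℝ (Fin n)) (e : Equiv.Perm (Fin 4)),
      M4 (v ∘ e) = M4 v)
    (N5 : ContinuousMultilinearMap ℝ (fun _ : Fin 5 => EuclideanSpace ℝ (Fin n)) ℝ)
    (hN5sym : ∀ (v : Fin 5 → EuclideanSpace ℝ (Fin n)) (e : Equiv.Perm (Fin 5)),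
      N5 (v ∘ e) = N5 v)
    (hconv : ConvexOn ℝ Set.univ (fun s : EuclideanSpace ℝ (Fin n) =>
      f₀ + ⟪g, s⟫_ℝ + (1 / 2) * ⟪s, H s⟫_ℝ + (1 / 6) * T3 (fun _ => s)
        + (1 / 24) * M4 (fun _ => s) + (1 / 120) * N5 (fun _ => s)
        + σ / 6 * ‖s‖ ^ 6))
    (hgrad : ∀ v, ⟪g, v⟫_ℝ + ⟪H sstar, v⟫_ℝ + (1 / 2) * T3 ![sstar, sstar, v]
      + (1 / 6) * M4 ![sstar, sstar, sstar, v]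
      + (1 / 24) * N5 ![sstar, sstar, sstar, sstar, v]
      + σ * ‖sstar‖ ^ 4 * ⟪sstar, v⟫_ℝ = 0)
    (hN : N5 (fun _ => sstar) ≥ 0) :
    f₀ - (f₀ + ⟪g, sstar⟫_ℝ + (1 / 2) * ⟪sstar, H sstar⟫_ℝ
        + (1 / 6) * T3 (fun _ => sstar) + (1 / 24) * M4 (fun _ => sstar)
        + (1 / 120) * N5 (fun _ => sstar))
      ≥ δ / 18 * ‖sstar‖ ^ 2 :=
  quintic_model_improved_decrease_general f₀ σ δ hσ g sstar H hHpos T3 M4 N5 hconv hgrad hN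
end

section
/- Let p ≥ 1 be an integer, σ_min > 0, p' ≥ p+1, and Λ_j > 0 for j = 1,…,p. Define D := max over 1 ≤ j ≤ p of max{((p·p'·Λ_j)/(j!·σ_min))^{1/(p'−j)}, 1}. Suppose s ∈ ℝⁿ and m(s) = f₀ + Σ_{j=1}^{p} a_j(s) + (σ/p')·∥s∥^{p'} with |a_j(s)| ≤ (Λ_j/j!)·∥s∥^j, σ ≥ σ_min, and m(s) ≤ m(0) = f₀. Then ∥s∥ ≤ D. -/
open Finset

/-- Uniform step-size upper bound: if the regularized model value at `s` does not
exceed its value at `0`, then `‖s‖ ≤ D`, where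
`D = max_{1 ≤ j ≤ p} max{((p p' Λ_j)/(j! σ_min))^{1/(p'-j)}, 1}`. -/
theorem step_upper_bound {n : ℕ} (p p' : ℕ) (hp : 1 ≤ p) (hp' : p + 1 ≤ p')
    (σmin σ f₀ : ℝ) (hσmin : 0 < σmin) (hσ : σmin ≤ σ)
    (Λ : ℕ → ℝ) (hΛ : ∀ j ∈ Finset.Icc 1 p, 0 < Λ j)
    (a : ℕ → EuclideanSpace ℝ (Fin n) → ℝ)
    (ha : ∀ j ∈ Finset.Icc 1 p, ∀ s : EuclideanSpace ℝ (Fin n),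
      |a j s| ≤ Λ j / (Nat.factorial j : ℝ) * ‖s‖ ^ j)
    (s : EuclideanSpace ℝ (Fin n))
    (hm : f₀ + ∑ j ∈ Finset.Icc 1 p, a j s + σ / (p' : ℝ) * ‖s‖ ^ p'
      ≤ f₀ + ∑ j ∈ Finset.Icc 1 p, a j (0 : EuclideanSpace ℝ (Fin n))
        + σ / (p' : ℝ) * ‖(0 : EuclideanSpace ℝ (Fin n))‖ ^ p') :
    ‖s‖ ≤ (Finset.Icc 1 p).sup' (Finset.nonempty_Icc.mpr hp)
      (fun j => max
        ((((p : ℝ) * (p' : ℝ) * Λ j) / ((Nat.factorial j : ℝ) * σmin))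
          ^ ((1 : ℝ) / ((p' : ℝ) - (j : ℝ)))) 1) := by
  by_contra hcon
  push_neg at hcon
  rw [Finset.sup'_lt_iff] at hcon
  set t := ‖s‖ with htdef
  have hp0 : (0:ℝ) < p := by exact_mod_cast hp
  have hp'0 : (0:ℝ) < p' := by exact_mod_cast (by omega : 0 < p')
  have ht1 : (1:ℝ) < t := by
    have := hcon p (Finset.mem_Icc.mpr ⟨hp, le_rfl⟩)
    exact lt_of_le_of_lt (le_max_right _ 1) this
  have ht0 : (0:ℝ) < t := lt_trans one_pos ht1
  -- a j 0 = 0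
  have ha0 : ∀ j ∈ Finset.Icc 1 p, a j (0 : EuclideanSpace ℝ (Fin n)) = 0 := by
    intro j hj
    have h1 : 1 ≤ j := (Finset.mem_Icc.mp hj).1
    have := ha j hj 0
    rw [norm_zero, zero_pow (by omega), mul_zero] at this
    exact abs_nonpos_iff.mp this
  have hsum0 : ∑ j ∈ Finset.Icc 1 p, a j (0 : EuclideanSpace ℝ (Fin n)) = 0 :=
    Finset.sum_eq_zero ha0
  have hz : ‖(0 : EuclideanSpace ℝ (Fin n))‖ ^ p' = 0 := by
    rw [norm_zero]; exact zero_pow (by omega)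
  rw [hsum0, hz, mul_zero, add_zero] at hm
  have key : σ / (p' : ℝ) * t ^ p' ≤ - ∑ j ∈ Finset.Icc 1 p, a j s := by linarith
  have habs : - ∑ j ∈ Finset.Icc 1 p, a j s ≤
      ∑ j ∈ Finset.Icc 1 p, Λ j / (Nat.factorial j : ℝ) * t ^ j := by
    calc - ∑ j ∈ Finset.Icc 1 p, a j s ≤ |∑ j ∈ Finset.Icc 1 p, a j s| := neg_le_abs _
      _ ≤ ∑ j ∈ Finset.Icc 1 p, |a j s| := Finset.abs_sum_le_sum_abs _ _
      _ ≤ ∑ j ∈ Finset.Icc 1 p, Λ j / (Nat.factorial j : ℝ) * t ^ j :=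
        Finset.sum_le_sum (fun j hj => ha j hj s)
  -- each term strict bound
  have hterm : ∀ j ∈ Finset.Icc 1 p,
      Λ j / (Nat.factorial j : ℝ) * t ^ j < σmin / ((p:ℝ) * p') * t ^ p' := by
    intro j hj
    obtain ⟨hj1, hjp⟩ := Finset.mem_Icc.mp hj
    have hje : (j:ℝ) < (p':ℝ) := by exact_mod_cast (by omega : j < p')
    have he : (0:ℝ) < (p':ℝ) - j := by linarith
    have hfj : (0:ℝ) < (Nat.factorial j : ℝ) := by
      exact_mod_cast Nat.factorial_pos j
    set c : ℝ := ((p:ℝ) * (p':ℝ) * Λ j) / ((Nat.factorial j : ℝ) * σmin) with hc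
    have hΛj := hΛ j hj
    have hc0 : 0 < c := div_pos (by positivity) (by positivity)
    have hlt : c ^ ((1:ℝ) / ((p':ℝ) - j)) < t :=
      lt_of_le_of_lt (le_max_left _ 1) (hcon j hj)
    have hpow : c < t ^ ((p':ℝ) - j) := by
      have := Real.rpow_lt_rpow (Real.rpow_nonneg hc0.le _) hlt he
      rwa [← Real.rpow_mul hc0.le, one_div, inv_mul_cancel₀ he.ne', Real.rpow_one] at this
    have htr : t ^ ((p':ℝ) - j) = t ^ p' / t ^ j := by
      rw [Real.rpow_sub ht0, Real.rpow_natCast, Real.rpow_natCast]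
    rw [htr] at hpow
    rw [hc, div_lt_div_iff₀ (by positivity) (by positivity)] at hpow
    rw [div_mul_eq_mul_div, div_mul_eq_mul_div, div_lt_div_iff₀ hfj (by positivity)]
    nlinarith [hpow]
  have hsumlt : ∑ j ∈ Finset.Icc 1 p, Λ j / (Nat.factorial j : ℝ) * t ^ j <
      ∑ j ∈ Finset.Icc 1 p, σmin / ((p:ℝ) * p') * t ^ p' :=
    Finset.sum_lt_sum_of_nonempty (Finset.nonempty_Icc.mpr hp) hterm
  have hcard : ∑ j ∈ Finset.Icc 1 p, σmin / ((p:ℝ) * p') * t ^ p'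
      = σmin / (p' : ℝ) * t ^ p' := by
    rw [Finset.sum_const, Nat.card_Icc]
    simp only [nsmul_eq_mul]
    have : ((p + 1 - 1 : ℕ) : ℝ) = (p : ℝ) := by norm_num
    rw [this]
    field_simp
  have hfin : σmin / (p' : ℝ) * t ^ p' ≤ σ / (p' : ℝ) * t ^ p' := by
    have : (0:ℝ) < t ^ p' := by positivity
    gcongr
  linarith
end
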